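/- Fix a₀ ∈ ℝ and define ψ(t) = √((2+a₀²)t² + 2a₀t + 1), V(t,x) = (ψ'(t)/ψ(t))·x, and p(t,x) = 1/(ψ(t)(ψ(t)² + x²)). Then the pressure transport equation with γ = 3, namely ∂_t p + V ∂_x p + 3p ∂_x V = 0, holds at every (t,x) ∈ ℝ × ℝ. -/

import Mathlib

/-- The time factor of the paper's explicit globally smooth 1D solution (γ = 3):
`ψ(t) = √((2+a₀²)t² + 2a₀t + 1)`. -/
noncomputable def psi (a₀ t : ℝ) : ℝ :=
  Real.sqrt ((2 + a₀ ^ 2) * t ^ 2 + 2 * a₀ * t + 1)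

/-!
The pressure equation holds for `p = 1/(ψ(ψ² + x²))` and `V = (ψ'/ψ) x` whenever `ψ` is
differentiable and nonvanishing at `t`: with `D = ψ(ψ² + x²)` one has `∂ₜD = ψ'(3ψ² + x²)`
and `V ∂ₓD = 2x²ψ'`, which together cancel `3D ∂ₓV = 3ψ'(ψ² + x²)`. The particular `ψ` only
has to be positive, which holds because `(2+a₀²)·Q(t) = ((2+a₀²)t + a₀)² + 2` for the
quadratic `Q` under the root.
-/

section PressureEquation

variable {ψ : ℝ → ℝ} {t : ℝ}

lemma hasDerivAt_one_div_mul_sq_add_sq {ψ' : ℝ} (hψ : HasDerivAt ψ ψ' t) (h0 : ψ t ≠ 0)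
    (x : ℝ) :
    HasDerivAt (fun s => 1 / (ψ s * (ψ s ^ 2 + x ^ 2)))
      (-(ψ' * (3 * ψ t ^ 2 + x ^ 2)) / (ψ t * (ψ t ^ 2 + x ^ 2)) ^ 2) t := by
  have hD : HasDerivAt (fun s => ψ s * (ψ s ^ 2 + x ^ 2)) (ψ' * (3 * ψ t ^ 2 + x ^ 2)) t :=
    (hψ.mul ((hψ.pow 2).add_const _)).congr_deriv (by norm_num; ring)
  have hD0 : ψ t * (ψ t ^ 2 + x ^ 2) ≠ 0 := by positivity
  simpa only [one_div] using hD.fun_inv hD0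

lemma hasDerivAt_const_one_div_mul_sq_add_sq {c : ℝ} (hc : c ≠ 0) (x : ℝ) :
    HasDerivAt (fun y => 1 / (c * (c ^ 2 + y ^ 2))) (-(c * (2 * x)) / (c * (c ^ 2 + x ^ 2)) ^ 2)
      x := by
  have hD : HasDerivAt (fun y => c * (c ^ 2 + y ^ 2)) (c * (2 * x)) x :=
    (((hasDerivAt_pow 2 x).const_add (c ^ 2)).const_mul c).congr_deriv (by norm_num)
  have hD0 : c * (c ^ 2 + x ^ 2) ≠ 0 := by positivity
  simpa only [one_div] using hD.fun_inv hD0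

theorem pressure_transport_eq_zero (hψ : DifferentiableAt ℝ ψ t) (h0 : ψ t ≠ 0) (x : ℝ) :
    deriv (fun s => 1 / (ψ s * ((ψ s) ^ 2 + x ^ 2))) t
      + ((deriv ψ t / ψ t) * x) * deriv (fun y => 1 / (ψ t * ((ψ t) ^ 2 + y ^ 2))) x
      + 3 * (1 / (ψ t * ((ψ t) ^ 2 + x ^ 2))) * deriv (fun y => (deriv ψ t / ψ t) * y) x
      = 0 := by
  have hV : deriv (fun y => (deriv ψ t / ψ t) * y) x = deriv ψ t / ψ t := by
    simp
  rw [(hasDerivAt_one_div_mul_sq_add_sq hψ.hasDerivAt h0 x).deriv,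
    (hasDerivAt_const_one_div_mul_sq_add_sq h0 x).deriv, hV]
  field_simp
  ring

end PressureEquation

lemma quadratic_pos (a₀ t : ℝ) : 0 < (2 + a₀ ^ 2) * t ^ 2 + 2 * a₀ * t + 1 := by
  nlinarith [sq_nonneg ((2 + a₀ ^ 2) * t + a₀), sq_nonneg a₀]

lemma psi_pos (a₀ t : ℝ) : 0 < psi a₀ t := Real.sqrt_pos.2 (quadratic_pos a₀ t)

lemma differentiableAt_psi (a₀ t : ℝ) : DifferentiableAt ℝ (psi a₀) t :=
  (by fun_prop : DifferentiableAt ℝ (fun s => (2 + a₀ ^ 2) * s ^ 2 + 2 * a₀ * s + 1) t).sqrt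
    (quadratic_pos a₀ t).ne'

/-- pressure equation for the explicit solution (16).
With `V = (ψ'/ψ)x` and `p = 1/(ψ(ψ²+x²))`, one has
`∂ₜp + V ∂ₓp + 3p ∂ₓV = 0` at every `(t,x)`. -/
theorem stmt11 (a₀ : ℝ) :
    ∀ t x : ℝ,
      deriv (fun s => 1 / (psi a₀ s * ((psi a₀ s) ^ 2 + x ^ 2))) t
        + ((deriv (psi a₀) t / psi a₀ t) * x)
            * deriv (fun y => 1 / (psi a₀ t * ((psi a₀ t) ^ 2 + y ^ 2))) x
        + 3 * (1 / (psi a₀ t * ((psi a₀ t) ^ 2 + x ^ 2)))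
            * deriv (fun y => (deriv (psi a₀) t / psi a₀ t) * y) x = 0 := fun t =>
  pressure_transport_eq_zero (differentiableAt_psi a₀ t) (psi_pos a₀ t).ne'
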